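/- arXiv:1806.06182 — 3 statements merged into one kernel-verified Lean document; each statement's English description precedes it below -/
import Mathlib

section
/- Let $(l_i)_{i\ge 1}$ be a strictly increasing sequence of positive reals and $(p_i)$ nonnegative reals summing to 1 with $p_1>0$. Then $\lim_{\alpha\to 0^+} \frac{\sum_i l_i \alpha^{l_i} p_i}{\sum_i \alpha^{l_i} p_i} = l_1$, provided the series converge for all $\alpha$ in $(0,1)$. -/
/-!
Subtract `l 0` from the numerator: what remains is the ratio of the excess series
`T α = ∑ (l i - l 0) α ^ l i p i` to the denominator `F α ≥ α ^ l 0 p 0`. Every term of `T` has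
exponent at least `l 0 + δ` with `δ = l 1 - l 0 > 0`, so comparing termwise with a fixed `β` gives
`T α ≤ (α / β) ^ (l 0 + δ) T β`, hence `T α / F α = O(α ^ δ) → 0`.
-/

open Filter Topology

lemma rpow_mul_rpow_le_rpow_mul_rpow {α β e x : ℝ} (hα : 0 < α) (hαβ : α ≤ β) (hex : e ≤ x) :
    α ^ x * β ^ e ≤ α ^ e * β ^ x := by
  have hβ : 0 < β := hα.trans_le hαβ
  calc α ^ x * β ^ e = α ^ e * α ^ (x - e) * β ^ e := by
        rw [← Real.rpow_add hα, add_sub_cancel]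
    _ ≤ α ^ e * β ^ (x - e) * β ^ e := by
        gcongr
    _ = α ^ e * β ^ x := by rw [mul_assoc, ← Real.rpow_add hβ, sub_add_cancel]

section Concentration

variable {ι : Type*} {l p : ι → ℝ} {i₀ : ι} {δ α β : ℝ}

lemma hasSum_sub_mul_rpow_mul (hA : Summable fun i => α ^ l i * p i)
    (hB : Summable fun i => l i * α ^ l i * p i) (c : ℝ) :
    HasSum (fun i => (l i - c) * α ^ l i * p i)
      ((∑' i, l i * α ^ l i * p i) - c * ∑' i, α ^ l i * p i) := by
  have hterm : (fun i => (l i - c) * α ^ l i * p i) =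
      fun i => l i * α ^ l i * p i - c * (α ^ l i * p i) := by
    funext i
    ring
  rw [hterm]
  exact hB.hasSum.sub (hA.hasSum.mul_left c)

lemma excess_mul_rpow_nonneg (hp : ∀ i, 0 ≤ p i) (hδ : 0 ≤ δ)
    (hgap : ∀ i ≠ i₀, l i₀ + δ ≤ l i) (hα : 0 ≤ α) (i : ι) :
    0 ≤ (l i - l i₀) * α ^ l i * p i := by
  by_cases hi : i = i₀
  · simp [hi]
  have hgap_i := hgap i hi
  exact mul_nonneg (mul_nonneg (by linarith) (Real.rpow_nonneg hα _)) (hp i)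

lemma excess_mul_rpow_le (hp : ∀ i, 0 ≤ p i) (hδ : 0 ≤ δ) (hgap : ∀ i ≠ i₀, l i₀ + δ ≤ l i)
    (hα : 0 < α) (hαβ : α ≤ β) (i : ι) :
    (l i - l i₀) * α ^ l i * p i * β ^ (l i₀ + δ) ≤
      α ^ (l i₀ + δ) * ((l i - l i₀) * β ^ l i * p i) := by
  by_cases hi : i = i₀
  · simp [hi]
  have hgap_i := hgap i hi
  have hc : 0 ≤ (l i - l i₀) * p i := mul_nonneg (by linarith) (hp i)
  calc (l i - l i₀) * α ^ l i * p i * β ^ (l i₀ + δ)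
      = (l i - l i₀) * p i * (α ^ l i * β ^ (l i₀ + δ)) := by ring
    _ ≤ (l i - l i₀) * p i * (α ^ (l i₀ + δ) * β ^ l i) :=
        mul_le_mul_of_nonneg_left (rpow_mul_rpow_le_rpow_mul_rpow hα hαβ hgap_i) hc
    _ = α ^ (l i₀ + δ) * ((l i - l i₀) * β ^ l i * p i) := by ring

lemma tsum_excess_mul_rpow_le (hp : ∀ i, 0 ≤ p i) (hδ : 0 ≤ δ)
    (hgap : ∀ i ≠ i₀, l i₀ + δ ≤ l i) (hα : 0 < α) (hαβ : α ≤ β)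
    (hTα : Summable fun i => (l i - l i₀) * α ^ l i * p i)
    (hTβ : Summable fun i => (l i - l i₀) * β ^ l i * p i) :
    (∑' i, (l i - l i₀) * α ^ l i * p i) * β ^ (l i₀ + δ) ≤
      α ^ (l i₀ + δ) * ∑' i, (l i - l i₀) * β ^ l i * p i := by
  rw [← tsum_mul_right, ← tsum_mul_left]
  exact Summable.tsum_le_tsum (excess_mul_rpow_le hp hδ hgap hα hαβ)
    (hTα.mul_right _) (hTβ.mul_left _)

lemma div_tsum_rpow_sub_mem_Icc (hp : ∀ i, 0 ≤ p i) (hp₀ : 0 < p i₀) (hδ : 0 ≤ δ)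
    (hgap : ∀ i ≠ i₀, l i₀ + δ ≤ l i) (hα : 0 < α) (hαβ : α ≤ β)
    (hAα : Summable fun i => α ^ l i * p i) (hBα : Summable fun i => l i * α ^ l i * p i)
    (hAβ : Summable fun i => β ^ l i * p i) (hBβ : Summable fun i => l i * β ^ l i * p i) :
    (∑' i, l i * α ^ l i * p i) / (∑' i, α ^ l i * p i) - l i₀ ∈ Set.Icc 0
      (α ^ δ * ((∑' i, (l i - l i₀) * β ^ l i * p i) / (β ^ (l i₀ + δ) * p i₀))) := by
  have hβ : 0 < β := hα.trans_le hαβ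
  have hTα := hasSum_sub_mul_rpow_mul hAα hBα (l i₀)
  have hTβ := hasSum_sub_mul_rpow_mul hAβ hBβ (l i₀)
  have hF : α ^ l i₀ * p i₀ ≤ ∑' i, α ^ l i * p i :=
    hAα.le_tsum i₀ fun j _ => mul_nonneg (Real.rpow_nonneg hα.le _) (hp j)
  have hFpos : 0 < ∑' i, α ^ l i * p i :=
    (mul_pos (Real.rpow_pos_of_pos hα _) hp₀).trans_le hF
  have hratio : (∑' i, l i * α ^ l i * p i) / (∑' i, α ^ l i * p i) - l i₀ =
      (∑' i, (l i - l i₀) * α ^ l i * p i) / ∑' i, α ^ l i * p i := by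
    rw [hTα.tsum_eq]
    field_simp
  have hTβ_nonneg : 0 ≤ ∑' i, (l i - l i₀) * β ^ l i * p i :=
    tsum_nonneg (excess_mul_rpow_nonneg hp hδ hgap hβ.le)
  rw [hratio]
  refine ⟨div_nonneg (tsum_nonneg (excess_mul_rpow_nonneg hp hδ hgap hα.le)) hFpos.le, ?_⟩
  rw [div_le_iff₀ hFpos]
  calc ∑' i, (l i - l i₀) * α ^ l i * p i
      ≤ α ^ (l i₀ + δ) * (∑' i, (l i - l i₀) * β ^ l i * p i) / β ^ (l i₀ + δ) := by
        rw [le_div_iff₀ (Real.rpow_pos_of_pos hβ _)]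
        exact tsum_excess_mul_rpow_le hp hδ hgap hα hαβ hTα.summable hTβ.summable
    _ = α ^ δ * ((∑' i, (l i - l i₀) * β ^ l i * p i) / (β ^ (l i₀ + δ) * p i₀)) *
          (α ^ l i₀ * p i₀) := by
        rw [Real.rpow_add hα]
        field_simp
    _ ≤ α ^ δ * ((∑' i, (l i - l i₀) * β ^ l i * p i) / (β ^ (l i₀ + δ) * p i₀)) *
          ∑' i, α ^ l i * p i := by
        gcongr

theorem tendsto_tsum_mul_rpow_div_tsum_rpow (hp : ∀ i, 0 ≤ p i) (hp₀ : 0 < p i₀) (hδ : 0 < δ)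
    (hgap : ∀ i ≠ i₀, l i₀ + δ ≤ l i) (hβ : 0 < β)
    (hA : ∀ α ∈ Set.Ioc 0 β, Summable fun i => α ^ l i * p i)
    (hB : ∀ α ∈ Set.Ioc 0 β, Summable fun i => l i * α ^ l i * p i) :
    Tendsto (fun α => (∑' i, l i * α ^ l i * p i) / ∑' i, α ^ l i * p i) (𝓝[>] 0)
      (𝓝 (l i₀)) := by
  have hβmem : β ∈ Set.Ioc 0 β := ⟨hβ, le_rfl⟩
  have hrpow : Tendsto (fun α : ℝ => α ^ δ) (𝓝[>] 0) (𝓝 0) := by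
    simpa [Real.zero_rpow hδ.ne'] using
      (Real.continuousAt_rpow_const 0 δ (Or.inr hδ.le)).tendsto.mono_left nhdsWithin_le_nhds
  have hsub : Tendsto (fun α => (∑' i, l i * α ^ l i * p i) / (∑' i, α ^ l i * p i) - l i₀)
      (𝓝[>] 0) (𝓝 0) := by
    have hmem := fun α (hα : α ∈ Set.Ioc 0 β) => div_tsum_rpow_sub_mem_Icc hp hp₀ hδ.le hgap
      hα.1 hα.2 (hA α hα) (hB α hα) (hA β hβmem) (hB β hβmem)
    refine squeeze_zero' (g := fun α => α ^ δ *
      ((∑' i, (l i - l i₀) * β ^ l i * p i) / (β ^ (l i₀ + δ) * p i₀))) ?_ ?_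
      (by simpa using hrpow.mul_const _)
    · filter_upwards [Ioc_mem_nhdsGT hβ] with α hα using (hmem α hα).1
    · filter_upwards [Ioc_mem_nhdsGT hβ] with α hα using (hmem α hα).2
  simpa using hsub.add_const (l i₀)

end Concentration

theorem routing_continuum_limit_shortest_general
    (l p : ℕ → ℝ)
    (hl : StrictMono l)
    (hp : ∀ i, 0 ≤ p i) (hp1 : 0 < p 0)
    (hA : ∀ α ∈ Set.Ioo (0:ℝ) 1, Summable (fun i => α ^ (l i) * p i))
    (hB : ∀ α ∈ Set.Ioo (0:ℝ) 1, Summable (fun i => l i * α ^ (l i) * p i)) :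
    Tendsto (fun α : ℝ => (∑' i, l i * α ^ (l i) * p i) / (∑' i, α ^ (l i) * p i))
      (𝓝[>] 0) (𝓝 (l 0)) := by
  have hgap : ∀ i ≠ 0, l 0 + (l 1 - l 0) ≤ l i := fun i hi => by
    rw [add_sub_cancel]
    exact hl.monotone (Nat.one_le_iff_ne_zero.2 hi)
  have hsub : Set.Ioc (0 : ℝ) (1 / 2) ⊆ Set.Ioo 0 1 := Set.Ioc_subset_Ioo_right (by norm_num)
  exact tendsto_tsum_mul_rpow_div_tsum_rpow hp hp1 (sub_pos.2 (hl zero_lt_one)) hgap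
    (by norm_num) (fun α hα => hA α (hsub hα)) (fun α hα => hB α (hsub hα))

/-- Routing Continuum, part (a): as α → 0⁺ the avoidance hitting cost converges to the
shortest path distance `l 0`. -/
theorem routing_continuum_limit_shortest
    (l p : ℕ → ℝ)
    (hl : StrictMono l) (hlpos : ∀ i, 0 < l i)
    (hp : ∀ i, 0 ≤ p i) (hpsum : ∑' i, p i = 1) (hp1 : 0 < p 0)
    (hA : ∀ α ∈ Set.Ioo (0:ℝ) 1, Summable (fun i => α ^ (l i) * p i))
    (hB : ∀ α ∈ Set.Ioo (0:ℝ) 1, Summable (fun i => l i * α ^ (l i) * p i)) :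
    Tendsto (fun α : ℝ => (∑' i, l i * α ^ (l i) * p i) / (∑' i, α ^ (l i) * p i))
      (𝓝[>] 0) (𝓝 (l 0)) :=
  routing_continuum_limit_shortest_general l p hl hp hp1 hA hB
end

section
/- Let $P$ be an $n\times n$ real matrix with spectral radius less than 1, and let $F = (I-P)^{-1} = \sum_{k\ge0} P^k$. Let $S\subseteq \{1,\dots,n\}$ be a set of indices such that the submatrix $F_{SS}$ is invertible. Let $P'$ be the matrix obtained from $P$ by zeroing out all rows and columns indexed by $S$ (i.e., the substochastic matrix of the chain where states in $S$ are made absorbing), and suppose $I - P'$ restricted to the complement $T = S^c$ is invertible with inverse $F'$. Then for all $i,m \in T$: $F'_{im} = F_{im} - F_{iS}(F_{SS})^{-1}F_{Sm}$. -/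
open Matrix

/-!
Write `G = (I - P)⁻¹` in block form along `S ⊔ T`. Reading off the `T`-rows of `(I - P) G = I`
gives `B_{TS} G_{SS} + B_{TT} G_{TS} = 0` and `B_{TS} G_{ST} + B_{TT} G_{TT} = I` with `B = I - P`.
Eliminating `B_{TS}` through the invertible block `G_{SS}` shows that the Schur complement
`G_{TT} - G_{TS} G_{SS}⁻¹ G_{ST}` is a right inverse of `B_{TT} = I - P'_{TT}`, hence its inverse.
-/

namespace Matrix

variable {n R : Type*} [Fintype n] [DecidableEq n] [CommRing R]
  (p : n → Prop) [DecidablePred p] {B G : Matrix n n R}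

theorem toBlock_compl_mul_schur_eq_one (hBG : B * G = 1) (hG : IsUnit (G.toBlock p p).det) :
    B.toBlock (¬p ·) (¬p ·) * (G.toBlock (¬p ·) (¬p ·) -
      G.toBlock (¬p ·) p * (G.toBlock p p)⁻¹ * G.toBlock p (¬p ·)) = 1 := by
  have h₂₁ : B.toBlock (¬p ·) (¬p ·) * G.toBlock (¬p ·) p =
      -(B.toBlock (¬p ·) p * G.toBlock p p) := by
    rw [eq_neg_iff_add_eq_zero, add_comm, ← toBlock_mul_eq_add, hBG]
    exact toBlock_one_disjoint disjoint_compl_left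
  have h₂₂ : B.toBlock (¬p ·) p * G.toBlock p (¬p ·) +
      B.toBlock (¬p ·) (¬p ·) * G.toBlock (¬p ·) (¬p ·) = 1 := by
    rw [← toBlock_mul_eq_add, hBG, toBlock_one_self]
  calc _ = B.toBlock (¬p ·) (¬p ·) * G.toBlock (¬p ·) (¬p ·) +
        B.toBlock (¬p ·) p * (G.toBlock p p * (G.toBlock p p)⁻¹) * G.toBlock p (¬p ·) := by
        rw [Matrix.mul_sub, ← Matrix.mul_assoc, ← Matrix.mul_assoc, h₂₁]
        simp only [Matrix.neg_mul, Matrix.mul_assoc, sub_neg_eq_add]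
    _ = 1 := by rw [mul_nonsing_inv _ hG, Matrix.mul_one, add_comm, h₂₂]

theorem inv_toBlock_compl_eq_schur (hBG : B * G = 1) (hG : IsUnit (G.toBlock p p).det) :
    (B.toBlock (¬p ·) (¬p ·))⁻¹ = G.toBlock (¬p ·) (¬p ·) -
      G.toBlock (¬p ·) p * (G.toBlock p p)⁻¹ * G.toBlock p (¬p ·) :=
  inv_eq_right_inv (toBlock_compl_mul_schur_eq_one p hBG hG)

end Matrix

theorem fundamental_matrix_incremental_general
    {n : Type*} [Fintype n] [DecidableEq n]
    (P F : Matrix n n ℝ)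
    (hinv : Invertible (1 - P)) (hF : F = (1 - P)⁻¹)
    (S : Set n) [DecidablePred (· ∈ S)]
    (FSS : Matrix {i // i ∈ S} {i // i ∈ S} ℝ)
    (hFSS : FSS = fun a b => F a.1 b.1) (hFSSinv : IsUnit FSS.det)
    (P' : Matrix n n ℝ)
    (hP' : ∀ i j, P' i j = if i ∈ S ∨ j ∈ S then 0 else P i j)
    (M : Matrix {i // i ∉ S} {i // i ∉ S} ℝ)
    (hM : M = fun a b => P' a.1 b.1)
    (F' : Matrix {i // i ∉ S} {i // i ∉ S} ℝ) (hF' : F' = (1 - M)⁻¹) :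
    ∀ i m : {i // i ∉ S},
      F' i m = F i.1 m.1 -
        ∑ a : {i // i ∈ S}, ∑ b : {i // i ∈ S},
          F i.1 a.1 * (FSS⁻¹ a b) * F b.1 m.1 := by
  have hFSS' : FSS = F.toBlock (· ∈ S) (· ∈ S) := hFSS
  have hM' : 1 - M = (1 - P).toBlock (· ∉ S) (· ∉ S) := by
    ext a b
    rw [Matrix.sub_apply, toBlock_apply, Matrix.sub_apply, hM]
    simp [hP', a.2, b.2, one_apply, Subtype.ext_iff]
  have hPF : (1 - P) * F = 1 := hF ▸ mul_nonsing_inv _ (isUnit_det_of_invertible _)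
  intro i m
  have hschur := congr_fun₂ (inv_toBlock_compl_eq_schur (· ∈ S) hPF (hFSS' ▸ hFSSinv)) i m
  rw [hF', hM', hschur, ← hFSS']
  simp only [Matrix.sub_apply, toBlock_apply, mul_apply, Finset.sum_mul]
  rw [Finset.sum_comm]

/-- Incremental computation of the fundamental matrix (Schur-complement identity):
enlarging the absorbing set by `S`, the new fundamental matrix on the remaining
transient states `T = Sᶜ` is `F' = F_{TT} - F_{TS} (F_{SS})⁻¹ F_{ST}`. -/
theorem fundamental_matrix_incremental
    {n : Type*} [Fintype n] [DecidableEq n]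
    (P F : Matrix n n ℝ)
    (hgeom : HasSum (fun k : ℕ => P ^ k) F)
    (hinv : Invertible (1 - P)) (hF : F = (1 - P)⁻¹)
    (S : Set n) [DecidablePred (· ∈ S)]
    (FSS : Matrix {i // i ∈ S} {i // i ∈ S} ℝ)
    (hFSS : FSS = fun a b => F a.1 b.1) (hFSSinv : IsUnit FSS.det)
    (P' : Matrix n n ℝ)
    (hP' : ∀ i j, P' i j = if i ∈ S ∨ j ∈ S then 0 else P i j)
    (M : Matrix {i // i ∉ S} {i // i ∉ S} ℝ)
    (hM : M = fun a b => P' a.1 b.1)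
    (hMinv : IsUnit (1 - M).det)
    (F' : Matrix {i // i ∉ S} {i // i ∉ S} ℝ) (hF' : F' = (1 - M)⁻¹) :
    ∀ i m : {i // i ∉ S},
      F' i m = F i.1 m.1 -
        ∑ a : {i // i ∈ S}, ∑ b : {i // i ∈ S},
          F i.1 a.1 * (FSS⁻¹ a b) * F b.1 m.1 :=
  fundamental_matrix_incremental_general P F hinv hF S FSS hFSS hFSSinv P' hP' M hM F' hF'
end

section
/- Combining the previous two statements: if additionally $\epsilon_s < \delta/d$ where $d$ is the out-degree of $s$, then $\sum_{j\in J}\check P_{sj} > (d-1)/d$, and hence the out-edge of $s$ with maximal probability $\check P_{sj}$ lies on a shortest path from $s$ to the target. -/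
/-- Shortest Path Routing Strategy theorem: if the error at `s` is below `δ/d`,
the shortest-path out-edges carry mass more than `(d-1)/d`, and the out-edge of
maximal probability lies on a shortest path. -/
theorem routing_strategy_argmax_shortest
    {ι : Type*} [Fintype ι] [Nonempty ι]
    (Pc : ι → ℝ) (hPc : ∀ m, 0 ≤ Pc m) (hPsum : ∑ m, Pc m = 1)
    (w U L ε : ι → ℝ) (Us Ls εs δ : ℝ) (hδ : 0 < δ)
    (hrec : Us = ∑ m, Pc m * (w m + U m))
    (hU : ∀ m, U m = L m + ε m) (hε : ∀ m, 0 ≤ ε m)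
    (hUs : Us = Ls + εs)
    (J : Finset ι)
    (hJ : ∀ j ∈ J, w j + L j = Ls)
    (hJc : ∀ m ∉ J, Ls + δ ≤ w m + L m)
    (hεs : εs < δ / (Fintype.card ι : ℝ)) :
    ((Fintype.card ι : ℝ) - 1) / (Fintype.card ι : ℝ) < ∑ j ∈ J, Pc j ∧
      ∀ k, (∀ m, Pc m ≤ Pc k) → k ∈ J := by
  classical
  set d : ℝ := (Fintype.card ι : ℝ) with hd
  have hdpos : (0:ℝ) < d := by
    have : 0 < Fintype.card ι := Fintype.card_pos
    exact_mod_cast Nat.cast_pos.mpr this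
  set t : ℝ := ∑ m ∈ Jᶜ, Pc m with ht
  have hsplit : (∑ j ∈ J, Pc j) + t = 1 := by
    rw [ht, Finset.sum_add_sum_compl, hPsum]
  -- key: Ls + εs ≥ Ls + δ * t
  have hkey : Ls + δ * t ≤ Ls + εs := by
    have h1 : ∑ m, Pc m * (w m + L m) ≤ Ls + εs := by
      rw [← hUs, hrec]
      apply Finset.sum_le_sum
      intro m _
      have := hε m
      have h2 : w m + L m ≤ w m + U m := by rw [hU m]; linarith
      exact mul_le_mul_of_nonneg_left h2 (hPc m)
    have h2 : Ls + δ * t ≤ ∑ m, Pc m * (w m + L m) := by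
      have hsum : (∑ j ∈ J, Pc j * (w j + L j)) + ∑ m ∈ Jᶜ, Pc m * (w m + L m)
          = ∑ m, Pc m * (w m + L m) := Finset.sum_add_sum_compl J _
      have hA : ∑ j ∈ J, Pc j * (w j + L j) = (∑ j ∈ J, Pc j) * Ls := by
        rw [Finset.sum_mul]
        exact Finset.sum_congr rfl fun j hj => by rw [hJ j hj]
      have hB : t * (Ls + δ) ≤ ∑ m ∈ Jᶜ, Pc m * (w m + L m) := by
        rw [ht, Finset.sum_mul]
        apply Finset.sum_le_sum
        intro m hm
        exact mul_le_mul_of_nonneg_left (hJc m (Finset.mem_compl.mp hm)) (hPc m)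
      have hC : (∑ j ∈ J, Pc j) = 1 - t := by linarith
      rw [hC] at hA
      nlinarith [hsum, hA, hB]
    linarith
  have htle : t ≤ εs / δ := by
    rw [le_div_iff₀ hδ]; linarith
  have htlt : t < 1 / d := by
    have : εs / δ < 1 / d := by
      rw [div_lt_div_iff₀ hδ hdpos]
      rw [lt_div_iff₀ hdpos] at hεs
      linarith
    linarith
  constructor
  · have : (d - 1) / d = 1 - 1 / d := by field_simp
    rw [this]
    linarith
  · intro k hk
    by_contra hkJ
    have hk1 : Pc k ≤ t := by
      rw [ht]
      exact Finset.single_le_sum (fun m _ => hPc m) (Finset.mem_compl.mpr hkJ)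
    have hmax : 1 ≤ d * Pc k := by
      rw [← hPsum]
      calc ∑ m, Pc m ≤ ∑ _m : ι, Pc k := Finset.sum_le_sum fun m _ => hk m
        _ = d * Pc k := by rw [Finset.sum_const, nsmul_eq_mul, Finset.card_univ, hd]
    have : 1 / d ≤ Pc k := by rw [div_le_iff₀ hdpos]; nlinarith
    linarith
end
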